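/- arXiv:2103.11073 — 2 statements merged into one kernel-verified Lean document; each statement's English description precedes it below -/
import Mathlib

section
/- For all positive reals x, y, τ, x̄, ȳ, τ̄, the inequality τ·ln(1 + 1/(xy)) ≥ 2τ̄·ln(1 + 1/(x̄ȳ)) + (τ̄/(1 + x̄ȳ))·(2 − x/x̄ − y/ȳ) − (τ̄²·ln(1 + 1/(x̄ȳ)))/τ holds. -/
/-!
The right-hand side is the first-order expansion at `(x̄, ȳ, τ̄)` of `τ ln(1 + 1/(xy))` in `x, y, 1/τ`,
and the inequality reduces to a one-variable tangent-line bound. By `2τ̄ab ≤ τa² + τ̄²b²/τ` with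
`a² = ln(1 + 1/(xy))`, `b² = ln(1 + 1/(x̄ȳ))`, and by AM-GM `x/x̄ + y/ȳ ≥ 2√(xy/(x̄ȳ))`, it suffices
that `g(u) = √(ln(1 + 1/u²))` lies above its tangent at `u = √(x̄ȳ)`. The function `g` is convex on
`(0, ∞)`: its derivative is `-1/√(M(u²))` with `M(t) = t(1+t)² ln(1 + 1/t)`, and `M` is increasing
because `M'(t) = (1+t)((1+3t) ln(1 + 1/t) - 1)` and `ln(1 + 1/t) ≥ 1/(1+t)`.
-/

open Real Set

lemma ConvexOn.add_mul_sub_le_of_hasDerivAt {S : Set ℝ} {f : ℝ → ℝ} {x y f' : ℝ}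
    (hf : ConvexOn ℝ S f) (hx : x ∈ S) (hy : y ∈ S) (hf' : HasDerivAt f f' x) :
    f x + f' * (y - x) ≤ f y := by
  rcases lt_trichotomy x y with hxy | rfl | hyx
  · have h := hf.le_slope_of_hasDerivAt hx hy hxy hf'
    rw [slope_def_field, le_div_iff₀ (sub_pos.2 hxy)] at h
    linarith
  · simp
  · have h := hf.slope_le_of_hasDerivAt hy hx hyx hf'
    rw [slope_def_field, div_le_iff₀ (sub_pos.2 hyx)] at h
    linarith

lemma two_mul_sqrt_mul_le_add {a b : ℝ} (ha : 0 ≤ a) (hb : 0 ≤ b) : 2 * √(a * b) ≤ a + b := by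
  rw [sqrt_mul ha]
  nlinarith [sq_nonneg (√a - √b), sq_sqrt ha, sq_sqrt hb]

lemma two_mul_mul_le_mul_sq_add_sq_div {a b c : ℝ} (hc : 0 < c) :
    2 * a * b ≤ c * a ^ 2 + b ^ 2 / c := by
  rw [← sub_nonneg]
  have h : c * a ^ 2 + b ^ 2 / c - 2 * a * b = (c * a - b) ^ 2 / c := by
    field_simp; ring
  rw [h]; positivity

lemma log_one_add_one_div_pos {t : ℝ} (ht : 0 < t) : 0 < log (1 + 1 / t) :=
  log_pos (by simp [ht])

lemma one_div_one_add_le_log_one_add_one_div {t : ℝ} (ht : 0 < t) :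
    1 / (1 + t) ≤ log (1 + 1 / t) := by
  have h := one_sub_inv_le_log_of_pos (x := 1 + 1 / t) (by positivity)
  have h' : 1 - (1 + 1 / t)⁻¹ = 1 / (1 + t) := by field_simp; ring
  linarith

lemma hasDerivAt_log_one_add_one_div {t : ℝ} (ht : 0 < t) :
    HasDerivAt (fun s => log (1 + 1 / s)) (-(1 / (t * (1 + t)))) t := by
  have h := (((hasDerivAt_inv ht.ne').const_add 1).log (by positivity))
  simp only [one_div]
  refine h.congr_deriv ?_
  field_simp
  ring

lemma monotoneOn_mul_one_add_sq_mul_log_one_add_one_div :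
    MonotoneOn (fun t => t * (1 + t) ^ 2 * log (1 + 1 / t)) (Ioi 0) := by
  have hderiv : ∀ t ∈ Ioi (0 : ℝ), HasDerivAt (fun t => t * (1 + t) ^ 2 * log (1 + 1 / t))
      ((1 + t) * ((1 + 3 * t) * log (1 + 1 / t) - 1)) t := by
    intro t ht
    have ht : 0 < t := ht
    have h := ((hasDerivAt_id' t).fun_mul (((hasDerivAt_id' t).const_add 1).fun_pow 2)).fun_mul
      (hasDerivAt_log_one_add_one_div ht)
    refine h.congr_deriv ?_
    field_simp
    ring
  refine monotoneOn_of_hasDerivWithinAt_nonneg (convex_Ioi 0)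
    (fun t ht => (hderiv t ht).continuousAt.continuousWithinAt)
    (fun t ht => (hderiv t (interior_subset ht)).hasDerivWithinAt) fun t ht => ?_
  rw [interior_Ioi] at ht
  have ht : 0 < t := ht
  have hlog := one_div_one_add_le_log_one_add_one_div ht
  have h : 1 ≤ (1 + 3 * t) * log (1 + 1 / t) := by
    calc (1 : ℝ) = (1 + t) * (1 / (1 + t)) := by field_simp
      _ ≤ (1 + 3 * t) * log (1 + 1 / t) := by gcongr; linarith
  have : 0 ≤ (1 + 3 * t) * log (1 + 1 / t) - 1 := by linarith
  positivity

lemma hasDerivAt_sqrt_log_one_add_one_div_sq {u : ℝ} (hu : 0 < u) :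
    HasDerivAt (fun v => √(log (1 + 1 / v ^ 2)))
      (-(1 / (u * (1 + u ^ 2) * √(log (1 + 1 / u ^ 2))))) u := by
  have hu2 : 0 < u ^ 2 := by positivity
  have hL := log_one_add_one_div_pos hu2
  have h := ((hasDerivAt_log_one_add_one_div hu2).comp (h := fun v => v ^ 2) u
    (hasDerivAt_pow 2 u)).sqrt hL.ne'
  simp only [Function.comp_def] at h
  refine h.congr_deriv ?_
  field_simp
  ring

lemma convexOn_sqrt_log_one_add_one_div_sq :
    ConvexOn ℝ (Ioi 0) (fun u => √(log (1 + 1 / u ^ 2))) := by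
  have hsqrt : ∀ u : ℝ, 0 < u → u * (1 + u ^ 2) * √(log (1 + 1 / u ^ 2)) =
      √(u ^ 2 * (1 + u ^ 2) ^ 2 * log (1 + 1 / u ^ 2)) := fun u hu => by
    rw [sqrt_mul (by positivity), sqrt_mul (by positivity), sqrt_sq hu.le, sqrt_sq (by positivity)]
  have hmono : MonotoneOn (fun u => -(1 / (u * (1 + u ^ 2) * √(log (1 + 1 / u ^ 2))))) (Ioi 0) := by
    intro a (ha : 0 < a) b (hb : 0 < b) hab
    have hLa := log_one_add_one_div_pos (pow_pos ha 2)
    simp only [neg_le_neg_iff]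
    refine one_div_le_one_div_of_le (by positivity) ?_
    rw [hsqrt a ha, hsqrt b hb]
    exact sqrt_le_sqrt (monotoneOn_mul_one_add_sq_mul_log_one_add_one_div (pow_pos ha 2)
      (pow_pos hb 2) (pow_le_pow_left₀ ha.le hab 2))
  refine MonotoneOn.convexOn_of_deriv (convex_Ioi 0)
    (fun u hu => (hasDerivAt_sqrt_log_one_add_one_div_sq hu).continuousAt.continuousWithinAt)
    (fun u hu => ?_) ?_
  · rw [interior_Ioi] at hu
    exact (hasDerivAt_sqrt_log_one_add_one_div_sq hu).differentiableAt.differentiableWithinAt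
  · rw [interior_Ioi]
    exact hmono.congr fun u hu => (hasDerivAt_sqrt_log_one_add_one_div_sq hu).deriv.symm

lemma log_one_add_one_div_add_le_sqrt_mul_sqrt {z zb : ℝ} (hz : 0 < z) (hzb : 0 < zb) :
    log (1 + 1 / zb) + (1 - √(z / zb)) / (1 + zb) ≤
      √(log (1 + 1 / z)) * √(log (1 + 1 / zb)) := by
  have hLb := log_one_add_one_div_pos hzb
  have hub : 0 < √zb := sqrt_pos.2 hzb
  have h := convexOn_sqrt_log_one_add_one_div_sq.add_mul_sub_le_of_hasDerivAt
    hub (sqrt_pos.2 hz) (hasDerivAt_sqrt_log_one_add_one_div_sq hub)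
  simp only [sq_sqrt hz.le, sq_sqrt hzb.le] at h
  calc log (1 + 1 / zb) + (1 - √(z / zb)) / (1 + zb)
      = √(log (1 + 1 / zb)) * (√(log (1 + 1 / zb)) +
          -(1 / (√zb * (1 + zb) * √(log (1 + 1 / zb)))) * (√z - √zb)) := by
        rw [sqrt_div hz.le, mul_add, ← sq, sq_sqrt hLb.le]
        have hq : √(log (1 + 1 / zb)) ≠ 0 := (sqrt_pos.2 hLb).ne'
        congr 1
        generalize √(log (1 + 1 / zb)) = q at hq ⊢
        field_simp
        ring
    _ ≤ √(log (1 + 1 / zb)) * √(log (1 + 1 / z)) := by gcongr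
    _ = √(log (1 + 1 / z)) * √(log (1 + 1 / zb)) := mul_comm _ _

theorem sca_inequality (x y τ xb yb τb : ℝ)
    (hx : 0 < x) (hy : 0 < y) (hτ : 0 < τ)
    (hxb : 0 < xb) (hyb : 0 < yb) (hτb : 0 < τb) :
    τ * Real.log (1 + 1 / (x * y)) ≥
      2 * τb * Real.log (1 + 1 / (xb * yb))
        + (τb / (1 + xb * yb)) * (2 - x / xb - y / yb)
        - (τb ^ 2 * Real.log (1 + 1 / (xb * yb))) / τ := by
  have htangent := log_one_add_one_div_add_le_sqrt_mul_sqrt (mul_pos hx hy) (mul_pos hxb hyb)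
  have hamgm : 2 * √(x * y / (xb * yb)) ≤ x / xb + y / yb := by
    rw [mul_div_mul_comm]
    exact two_mul_sqrt_mul_le_add (by positivity) (by positivity)
  have hsq := two_mul_mul_le_mul_sq_add_sq_div (a := √(Real.log (1 + 1 / (x * y))))
    (b := τb * √(Real.log (1 + 1 / (xb * yb)))) hτ
  rw [mul_pow, sq_sqrt (log_one_add_one_div_pos (mul_pos hx hy)).le,
    sq_sqrt (log_one_add_one_div_pos (mul_pos hxb hyb)).le] at hsq
  calc 2 * τb * Real.log (1 + 1 / (xb * yb))
        + (τb / (1 + xb * yb)) * (2 - x / xb - y / yb)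
        - (τb ^ 2 * Real.log (1 + 1 / (xb * yb))) / τ
      ≤ 2 * τb * Real.log (1 + 1 / (xb * yb))
        + (τb / (1 + xb * yb)) * (2 * (1 - √(x * y / (xb * yb))))
        - (τb ^ 2 * Real.log (1 + 1 / (xb * yb))) / τ := by gcongr; linarith
    _ = 2 * τb * (Real.log (1 + 1 / (xb * yb)) + (1 - √(x * y / (xb * yb))) / (1 + xb * yb))
        - (τb ^ 2 * Real.log (1 + 1 / (xb * yb))) / τ := by ring
    _ ≤ 2 * τb * (√(Real.log (1 + 1 / (x * y))) * √(Real.log (1 + 1 / (xb * yb))))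
        - (τb ^ 2 * Real.log (1 + 1 / (xb * yb))) / τ := by gcongr
    _ ≤ τ * Real.log (1 + 1 / (x * y)) := by linarith
end

section
/- For positive reals p, g₀, b, u, p̄, b̄, ū, define λ = 2b̄·ln(1 + p̄g₀/(b̄ū)), μ = b̄/(1 + b̄ū/(p̄g₀)), ν = b̄²·ln(1 + p̄g₀/(b̄ū)). Then b·log₂(1 + p·g₀/(b·u)) ≥ (1/ln 2)·(λ + μ·(2 − (u/p)·(p̄/ū) − b/b̄) − ν/b). -/
/-!
With `x = u / (p g₀)` and `w = 1 / b`, the rate is `b log (1 + p g₀ / (b u)) = w⁻¹ log (1 + w / x)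
= ∫₀¹ dt / (x + w t)`. As an integral of reciprocals of affine functions this is jointly convex in
`(x, w)`, and integrating the tangent-line bound `1 / a ≥ 2 / c - a / c²` along the segment gives its
tangent plane at `(ū / (p̄ g₀), 1 / b̄)`. The claimed bound is that tangent plane weakened by
`b / b̄ + b̄ / b ≥ 2`.
-/

open Real intervalIntegral Set

lemma two_div_sub_div_sq_le_inv {a c : ℝ} (ha : 0 < a) (hc : 0 < c) :
    2 / c - a / c ^ 2 ≤ a⁻¹ := by
  have h : a⁻¹ - (2 / c - a / c ^ 2) = (a - c) ^ 2 / (a * c ^ 2) := by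
    field_simp
    ring
  rw [← sub_nonneg, h]
  positivity

section AffinePath

variable {x w : ℝ}

lemma add_mul_pos_of_mem_uIcc (hx : 0 < x) (hw : 0 < w) {t : ℝ} (ht : t ∈ uIcc (0 : ℝ) 1) :
    0 < x + w * t := by
  rw [uIcc_of_le zero_le_one] at ht
  have := ht.1
  positivity

lemma intervalIntegrable_inv_add_mul (hx : 0 < x) (hw : 0 < w) :
    IntervalIntegrable (fun t => (x + w * t)⁻¹) MeasureTheory.volume 0 1 :=
  intervalIntegrable_inv (fun _ ht => (add_mul_pos_of_mem_uIcc hx hw ht).ne') (by fun_prop)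

lemma intervalIntegrable_inv_sq_add_mul (hx : 0 < x) (hw : 0 < w) :
    IntervalIntegrable (fun t => ((x + w * t) ^ 2)⁻¹) MeasureTheory.volume 0 1 :=
  intervalIntegrable_inv (fun _ ht => (pow_pos (add_mul_pos_of_mem_uIcc hx hw ht) 2).ne')
    (by fun_prop)

lemma integral_inv_add_mul (hx : 0 < x) (hw : 0 < w) :
    ∫ t in (0 : ℝ)..1, (x + w * t)⁻¹ = w⁻¹ * log (1 + w / x) := by
  rw [integral_comp_add_mul (fun s => s⁻¹) hw.ne', mul_zero, mul_one, add_zero,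
    integral_inv_of_pos hx (by positivity), smul_eq_mul]
  congr 2
  field_simp

lemma integral_inv_sq_add_mul (hx : 0 < x) (hw : 0 < w) :
    ∫ t in (0 : ℝ)..1, ((x + w * t) ^ 2)⁻¹ = (x * (x + w))⁻¹ := by
  have hpos : ∀ s ∈ uIcc x (x + w), 0 < s := fun s hs => by
    rw [uIcc_of_le (by linarith)] at hs
    exact hx.trans_le hs.1
  rw [integral_comp_add_mul (fun s => (s ^ 2)⁻¹) hw.ne', smul_eq_mul, mul_zero, mul_one,
    add_zero, integral_eq_sub_of_hasDerivAt (f := fun s => -s⁻¹)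
      (fun s hs => by simpa using (hasDerivAt_inv (hpos s hs).ne').fun_neg)
      (intervalIntegrable_inv (fun s hs => (pow_pos (hpos s hs) 2).ne') (by fun_prop))]
  field_simp
  ring

end AffinePath

lemma tangent_le_inv_mul_log_one_add_div {x w y v : ℝ} (hx : 0 < x) (hw : 0 < w) (hy : 0 < y)
    (hv : 0 < v) :
    (2 - w / v) * (v⁻¹ * log (1 + v / y)) - (x - w * y / v) * (y * (y + v))⁻¹ ≤
      w⁻¹ * log (1 + w / x) := by
  calc (2 - w / v) * (v⁻¹ * log (1 + v / y)) - (x - w * y / v) * (y * (y + v))⁻¹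
      = ∫ t in (0 : ℝ)..1,
          ((2 - w / v) * (y + v * t)⁻¹ - (x - w * y / v) * ((y + v * t) ^ 2)⁻¹) := by
        rw [integral_sub ((intervalIntegrable_inv_add_mul hy hv).const_mul _)
            ((intervalIntegrable_inv_sq_add_mul hy hv).const_mul _),
          integral_const_mul, integral_const_mul, integral_inv_add_mul hy hv,
          integral_inv_sq_add_mul hy hv]
    _ ≤ ∫ t in (0 : ℝ)..1, (x + w * t)⁻¹ := by
        refine integral_mono_on zero_le_one
          (((intervalIntegrable_inv_add_mul hy hv).const_mul _).sub
            ((intervalIntegrable_inv_sq_add_mul hy hv).const_mul _))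
          (intervalIntegrable_inv_add_mul hx hw) fun t ht => ?_
        have hlin : (2 - w / v) * (y + v * t)⁻¹ - (x - w * y / v) * ((y + v * t) ^ 2)⁻¹ =
            2 / (y + v * t) - (x + w * t) / (y + v * t) ^ 2 := by
          field_simp
          ring
        rw [hlin]
        exact two_div_sub_div_sq_le_inv (add_mul_pos_of_mem_uIcc hx hw (Icc_subset_uIcc ht))
          (add_mul_pos_of_mem_uIcc hy hv (Icc_subset_uIcc ht))
    _ = w⁻¹ * log (1 + w / x) := integral_inv_add_mul hx hw

theorem rate_sca_bound (p g₀ b u pb bb ub : ℝ)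
    (hp : 0 < p) (hg : 0 < g₀) (hb : 0 < b) (hu : 0 < u)
    (hpb : 0 < pb) (hbb : 0 < bb) (hub : 0 < ub) :
    b * Real.logb 2 (1 + p * g₀ / (b * u)) ≥
      (1 / Real.log 2) *
        ((2 * bb * Real.log (1 + pb * g₀ / (bb * ub)))
          + (bb / (1 + bb * ub / (pb * g₀))) * (2 - (u / p) * (pb / ub) - b / bb)
          - (bb ^ 2 * Real.log (1 + pb * g₀ / (bb * ub))) / b) := by
  have key := tangent_le_inv_mul_log_one_add_div (x := u / (p * g₀)) (w := b⁻¹)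
    (y := ub / (pb * g₀)) (v := bb⁻¹) (by positivity) (by positivity) (by positivity)
    (by positivity)
  have hsnr : ∀ {p b u : ℝ}, 0 < p → 0 < b → 0 < u →
      b⁻¹ / (u / (p * g₀)) = p * g₀ / (b * u) := fun hp hb hu => by field_simp
  rw [hsnr hp hb hu, hsnr hpb hbb hub] at key
  simp only [inv_inv] at key
  rw [ge_iff_le, one_div_mul_eq_div, logb, ← mul_div_assoc b]
  refine div_le_div_of_nonneg_right (le_trans ?_ key) (log_pos one_lt_two).le
  rw [← sub_nonneg]
  -- the slack is `b / bb + bb / b - 2`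
  calc 0 ≤ bb / (1 + bb * ub / (pb * g₀)) * ((b - bb) ^ 2 / (b * bb)) := by positivity
    _ = _ := by
      field_simp
      ring
end
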